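/- arXiv:1306.4295 — 5 statements merged into one kernel-verified Lean document; each statement's English description precedes it below -/
import Mathlib

section
/- Representation formula: let f = I(F) be a slice function on Ω_D and J, K ∈ S with J ≠ K. Then for every I ∈ S and every x = α + βI ∈ Ω_D with z = α + iβ ∈ D, f(x) = (I - K)((J - K)⁻¹ f(α + βJ)) - (I - J)((J - K)⁻¹ f(α + βK)). -/
/-! On each slice `f(α + βL) = A + L B` with `A = F₁ z`, `B = F₂ z`, so the formula is an identity
in `ℍ` about the affine map `L ↦ A + L B`. It holds because `J² = K² = -1` makes `J - K` intertwine
`K` with `-J` (and `J` with `-K`), so that `(J - K)⁻¹ J = -K (J - K)⁻¹`; moving `(J - K)⁻¹`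
across the units this way collapses the right-hand side to `A + I B`. -/

theorem semiconjBy_sub_of_sq_eq_neg_one {R : Type*} [Ring R] {J K : R}
    (hJ : J ^ 2 = -1) (hK : K ^ 2 = -1) : SemiconjBy (J - K) K (-J) := by
  rw [SemiconjBy, sub_mul, mul_sub, neg_mul, neg_mul, ← sq, ← sq, hJ, hK]
  noncomm_ring

theorem inv_sub_mul_eq_neg_mul_inv_sub {R : Type*} [DivisionRing R] {J K : R}
    (hJ : J ^ 2 = -1) (hK : K ^ 2 = -1) : (J - K)⁻¹ * J = -(K * (J - K)⁻¹) := by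
  have := (semiconjBy_sub_of_sq_eq_neg_one hJ hK).inv_symm_left₀
  rw [SemiconjBy, mul_neg] at this
  rw [← this, neg_neg]

theorem add_mul_eq_of_sq_eq_neg_one {R : Type*} [DivisionRing R] {J K : R}
    (hJ : J ^ 2 = -1) (hK : K ^ 2 = -1) (hJK : J ≠ K) (I A B : R) :
    A + I * B = (I - K) * ((J - K)⁻¹ * (A + J * B)) - (I - J) * ((J - K)⁻¹ * (A + K * B)) := by
  have huK : (J - K)⁻¹ * K = -(J * (J - K)⁻¹) := by
    rw [← neg_sub K J, inv_neg, neg_mul, mul_neg, neg_inj]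
    exact inv_sub_mul_eq_neg_mul_inv_sub hK hJ
  rw [mul_add _ A, mul_add _ A, ← mul_assoc _ J, inv_sub_mul_eq_neg_mul_inv_sub hJ hK,
    ← mul_assoc _ K, huK]
  set u := (J - K)⁻¹
  calc A + I * B = ((J - K) * u) * A + (I * ((J - K) * u) + (K ^ 2 - J ^ 2) * u) * B := by
        rw [mul_inv_cancel₀ (sub_ne_zero.mpr hJK), hJ, hK]; noncomm_ring
    _ = _ := by noncomm_ring

theorem representation_formula_general (D : Set ℂ)
    (F₁ F₂ : ℂ → Quaternion ℝ)
    (f : Quaternion ℝ → Quaternion ℝ)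
    (hf : ∀ (I : Quaternion ℝ), I ^ 2 = -1 → ∀ α β : ℝ, (α : ℂ) + β * Complex.I ∈ D →
      f ((α : Quaternion ℝ) + β • I)
        = F₁ ((α : ℂ) + β * Complex.I) + I * F₂ ((α : ℂ) + β * Complex.I))
    (I J K : Quaternion ℝ) (hI : I ^ 2 = -1) (hJ : J ^ 2 = -1) (hK : K ^ 2 = -1)
    (hJK : J ≠ K) (α β : ℝ) (hz : (α : ℂ) + β * Complex.I ∈ D) :
    f ((α : Quaternion ℝ) + β • I)
      = (I - K) * ((J - K)⁻¹ * f ((α : Quaternion ℝ) + β • J))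
        - (I - J) * ((J - K)⁻¹ * f ((α : Quaternion ℝ) + β • K)) := by
  rw [hf I hI α β hz, hf J hJ α β hz, hf K hK α β hz]
  exact add_mul_eq_of_sq_eq_neg_one hJ hK hJK _ _ _

/-- Representation formula for slice functions:
`f(α+βI) = (I-K)((J-K)⁻¹ f(α+βJ)) - (I-J)((J-K)⁻¹ f(α+βK))`. -/
theorem representation_formula (D : Set ℂ) (hD : IsOpen D)
    (hsym : ∀ z ∈ D, (starRingEnd ℂ) z ∈ D)
    (F₁ F₂ : ℂ → Quaternion ℝ)
    (hstem : ∀ z ∈ D, F₁ ((starRingEnd ℂ) z) = F₁ z ∧ F₂ ((starRingEnd ℂ) z) = -F₂ z)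
    (f : Quaternion ℝ → Quaternion ℝ)
    (hf : ∀ (I : Quaternion ℝ), I ^ 2 = -1 → ∀ α β : ℝ, (α : ℂ) + β * Complex.I ∈ D →
      f ((α : Quaternion ℝ) + β • I)
        = F₁ ((α : ℂ) + β * Complex.I) + I * F₂ ((α : ℂ) + β * Complex.I))
    (I J K : Quaternion ℝ) (hI : I ^ 2 = -1) (hJ : J ^ 2 = -1) (hK : K ^ 2 = -1)
    (hJK : J ≠ K) (α β : ℝ) (hz : (α : ℂ) + β * Complex.I ∈ D) :
    f ((α : Quaternion ℝ) + β • I)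
      = (I - K) * ((J - K)⁻¹ * f ((α : Quaternion ℝ) + β • J))
        - (I - J) * ((J - K)⁻¹ * f ((α : Quaternion ℝ) + β • K)) :=
  representation_formula_general D F₁ F₂ f hf I J K hI hJ hK hJK α β hz
end

section
/- For slice functions f, g on Ω_D, in general (f·g)(x) = f(x)·[g evaluated at x twisted]: explicitly, if x = α + βJ, z = α + iβ, and f(x) = F₁(z) + J F₂(z) ≠ 0, then (f·g)(x) = f(x) · g(f(x)⁻¹ x f(x)). -/
/-!
Conjugating `x = α + βJ` by `q = f(x) ≠ 0` moves it to `α + βJ'` with `J' = q⁻¹ J q`, again an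
imaginary unit, so `g(q⁻¹ x q) = G₁(z) + J' G₂(z)`. Since `q J' = J q`, multiplying on the left by
`q = F₁(z) + J F₂(z)` gives `q G₁(z) + J q G₂(z)`, which expands to the slice product formula.
-/

lemma conj_sq_eq_neg_one {A : Type*} [DivisionRing A] {q J : A} (hq : q ≠ 0)
    (hJ : J ^ 2 = -1) : (q⁻¹ * J * q) ^ 2 = -1 := by
  rw [GroupWithZero.conj_pow₀ hq, hJ, mul_neg_one, neg_mul, inv_mul_cancel₀ hq]

lemma Quaternion.inv_mul_coe_add_smul_mul {R : Type*} [Field R] [LinearOrder R] [IsStrictOrderedRing R]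
    {q : Quaternion R} (hq : q ≠ 0) (a b : R) (J : Quaternion R) :
    q⁻¹ * ((a : Quaternion R) + b • J) * q = (a : Quaternion R) + b • (q⁻¹ * J * q) := by
  rw [mul_add, add_mul, ← Quaternion.coe_commutes, mul_assoc, inv_mul_cancel₀ hq, mul_one,
    mul_smul_comm, smul_mul_assoc]

lemma add_mul_mul_add_of_mul_eq {A : Type*} [Ring A] {J J' a b c d : A} (hJ : J * J = -1)
    (hJ' : (a + J * b) * J' = J * (a + J * b)) :
    (a + J * b) * (c + J' * d) = (a * c - b * d) + J * (a * d + b * c) := by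
  calc (a + J * b) * (c + J' * d) = (a + J * b) * c + J * (a + J * b) * d := by
        rw [mul_add, ← mul_assoc, hJ']
    _ = (a * c + J * J * (b * d)) + J * (a * d + b * c) := by noncomm_ring
    _ = (a * c - b * d) + J * (a * d + b * c) := by rw [hJ]; noncomm_ring

theorem slice_product_twist_general (D : Set ℂ)
    (F₁ F₂ G₁ G₂ : ℂ → Quaternion ℝ)
    (f g h : Quaternion ℝ → Quaternion ℝ)
    (hf : ∀ (I : Quaternion ℝ), I ^ 2 = -1 → ∀ α β : ℝ, (α : ℂ) + β * Complex.I ∈ D →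
      f ((α : Quaternion ℝ) + β • I)
        = F₁ ((α : ℂ) + β * Complex.I) + I * F₂ ((α : ℂ) + β * Complex.I))
    (hg : ∀ (I : Quaternion ℝ), I ^ 2 = -1 → ∀ α β : ℝ, (α : ℂ) + β * Complex.I ∈ D →
      g ((α : Quaternion ℝ) + β • I)
        = G₁ ((α : ℂ) + β * Complex.I) + I * G₂ ((α : ℂ) + β * Complex.I))
    (hh : ∀ (I : Quaternion ℝ), I ^ 2 = -1 → ∀ α β : ℝ, (α : ℂ) + β * Complex.I ∈ D →
      h ((α : Quaternion ℝ) + β • I)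
        = (F₁ ((α : ℂ) + β * Complex.I) * G₁ ((α : ℂ) + β * Complex.I)
            - F₂ ((α : ℂ) + β * Complex.I) * G₂ ((α : ℂ) + β * Complex.I))
          + I * (F₁ ((α : ℂ) + β * Complex.I) * G₂ ((α : ℂ) + β * Complex.I)
            + F₂ ((α : ℂ) + β * Complex.I) * G₁ ((α : ℂ) + β * Complex.I)))
    (J : Quaternion ℝ) (hJ : J ^ 2 = -1) (α β : ℝ)
    (hz : (α : ℂ) + β * Complex.I ∈ D)
    (hne : f ((α : Quaternion ℝ) + β • J) ≠ 0) :
    h ((α : Quaternion ℝ) + β • J)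
      = f ((α : Quaternion ℝ) + β • J)
        * g ((f ((α : Quaternion ℝ) + β • J))⁻¹ * ((α : Quaternion ℝ) + β • J)
              * f ((α : Quaternion ℝ) + β • J)) := by
  set q := f ((α : Quaternion ℝ) + β • J)
  have hq : q = F₁ (α + β * Complex.I) + J * F₂ (α + β * Complex.I) := hf J hJ α β hz
  have hgq : g (q⁻¹ * ((α : Quaternion ℝ) + β • J) * q)
      = G₁ (α + β * Complex.I) + q⁻¹ * J * q * G₂ (α + β * Complex.I) := by
    rw [Quaternion.inv_mul_coe_add_smul_mul hne]
    exact hg _ (conj_sq_eq_neg_one hne hJ) α β hz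
  have hqJ : q * (q⁻¹ * J * q) = J * q := by rw [← mul_assoc, mul_inv_cancel_left₀ hne]
  rw [hh J hJ α β hz, hgq, hq]
  rw [hq] at hqJ
  exact (add_mul_mul_add_of_mul_eq (by rw [← sq, hJ]) hqJ).symm

/-- For slice functions, `(f·g)(x) = f(x) g(f(x)⁻¹ x f(x))` whenever `f(x) ≠ 0`. -/
theorem slice_product_twist (D : Set ℂ) (hD : IsOpen D)
    (hsym : ∀ z ∈ D, (starRingEnd ℂ) z ∈ D)
    (F₁ F₂ G₁ G₂ : ℂ → Quaternion ℝ)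
    (hstemF : ∀ z ∈ D, F₁ ((starRingEnd ℂ) z) = F₁ z ∧ F₂ ((starRingEnd ℂ) z) = -F₂ z)
    (hstemG : ∀ z ∈ D, G₁ ((starRingEnd ℂ) z) = G₁ z ∧ G₂ ((starRingEnd ℂ) z) = -G₂ z)
    (f g h : Quaternion ℝ → Quaternion ℝ)
    (hf : ∀ (I : Quaternion ℝ), I ^ 2 = -1 → ∀ α β : ℝ, (α : ℂ) + β * Complex.I ∈ D →
      f ((α : Quaternion ℝ) + β • I)
        = F₁ ((α : ℂ) + β * Complex.I) + I * F₂ ((α : ℂ) + β * Complex.I))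
    (hg : ∀ (I : Quaternion ℝ), I ^ 2 = -1 → ∀ α β : ℝ, (α : ℂ) + β * Complex.I ∈ D →
      g ((α : Quaternion ℝ) + β • I)
        = G₁ ((α : ℂ) + β * Complex.I) + I * G₂ ((α : ℂ) + β * Complex.I))
    (hh : ∀ (I : Quaternion ℝ), I ^ 2 = -1 → ∀ α β : ℝ, (α : ℂ) + β * Complex.I ∈ D →
      h ((α : Quaternion ℝ) + β • I)
        = (F₁ ((α : ℂ) + β * Complex.I) * G₁ ((α : ℂ) + β * Complex.I)
            - F₂ ((α : ℂ) + β * Complex.I) * G₂ ((α : ℂ) + β * Complex.I))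
          + I * (F₁ ((α : ℂ) + β * Complex.I) * G₂ ((α : ℂ) + β * Complex.I)
            + F₂ ((α : ℂ) + β * Complex.I) * G₁ ((α : ℂ) + β * Complex.I)))
    (J : Quaternion ℝ) (hJ : J ^ 2 = -1) (α β : ℝ)
    (hz : (α : ℂ) + β * Complex.I ∈ D)
    (hne : f ((α : Quaternion ℝ) + β • J) ≠ 0) :
    h ((α : Quaternion ℝ) + β • J)
      = f ((α : Quaternion ℝ) + β • J)
        * g ((f ((α : Quaternion ℝ) + β • J))⁻¹ * ((α : Quaternion ℝ) + β • J)
              * f ((α : Quaternion ℝ) + β • J)) :=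
  slice_product_twist_general D F₁ F₂ G₁ G₂ f g h hf hg hh J hJ α β hz hne
end

section
/- The zero set of the symmetrization is the circularization of the zero set: for any slice function f on Ω_D, V(N(f)) = ⋃_{x ∈ V(f)} S_x, where N(f) = I(F F^c) is the normal function of f. -/
/-!
Write `a = F₁(z)`, `b = F₂(z)`. On the sphere through `α + βJ` the normal function takes the
value `(|a|² - |b|²) + 2 Re(a b̄) J`, which vanishes iff `|a| = |b|` and `Re(a b̄) = 0`. These
are exactly the conditions for `a + I b = 0` to have a solution `I` among the imaginary units:
for `b ≠ 0` take `I = -a b⁻¹`.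
-/

namespace Quaternion

variable {R : Type*} [Field R] [LinearOrder R] [IsStrictOrderedRing R] {J : ℍ[R]}

theorem sq_eq_neg_one_iff : J ^ 2 = -1 ↔ J.re = 0 ∧ normSq J = 1 := by
  rw [← sq_eq_neg_normSq]
  constructor
  · intro hJ
    have hnorm : normSq J = 1 := by
      have h := congrArg normSq hJ
      rw [map_pow, normSq_neg, map_one] at h
      nlinarith [normSq_nonneg (a := J)]
    exact ⟨by rw [hJ, hnorm, coe_one], hnorm⟩
  · rintro ⟨hJ, hnorm⟩
    rw [hJ, hnorm, coe_one]

theorem exists_sq_eq_neg_one : ∃ I : ℍ[R], I ^ 2 = -1 :=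
  ⟨(equivTuple R).symm ![0, 1, 0, 0], sq_eq_neg_one_iff.2 ⟨rfl, by rw [normSq_def']; simp⟩⟩

theorem mul_star_add_mul_star (a b : ℍ[R]) :
    a * star b + b * star a = ((2 * (a * star b).re : R) : ℍ[R]) := by
  simpa only [star_mul, star_star] using self_add_star' (a * star b)

theorem coe_add_mul_coe_eq_zero_iff (hre : J.re = 0) (hJ : J ≠ 0) (x y : R) :
    (x : ℍ[R]) + J * y = 0 ↔ x = 0 ∧ y = 0 := by
  refine ⟨fun h => ?_, fun ⟨hx, hy⟩ => by simp [hx, hy]⟩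
  have hx : x = 0 := by
    simpa [mul_coe_eq_smul, hre] using congrArg QuaternionAlgebra.re h
  refine ⟨hx, ?_⟩
  rw [hx, coe_zero, zero_add, mul_eq_zero] at h
  exact coe_inj.1 (h.resolve_left hJ)

theorem mul_star_sub_mul_star_add_mul_eq_zero_iff {a b : ℍ[R]} (hJ : J ^ 2 = -1) :
    a * star a - b * star b + J * (a * star b + b * star a) = 0 ↔
      normSq a = normSq b ∧ (a * star b).re = 0 := by
  have hJ0 : J ≠ 0 := by rintro rfl; simp at hJ
  rw [self_mul_star, self_mul_star, mul_star_add_mul_star, ← coe_sub,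
    coe_add_mul_coe_eq_zero_iff (sq_eq_neg_one_iff.1 hJ).1 hJ0, sub_eq_zero]
  simp

theorem exists_sq_eq_neg_one_add_mul_eq_zero_iff {a b : ℍ[R]} :
    (∃ I : ℍ[R], I ^ 2 = -1 ∧ a + I * b = 0) ↔ normSq a = normSq b ∧ (a * star b).re = 0 := by
  constructor
  · rintro ⟨I, hI, hab⟩
    obtain ⟨hIre, hInorm⟩ := sq_eq_neg_one_iff.1 hI
    rw [add_eq_zero_iff_eq_neg.1 hab]
    refine ⟨by rw [normSq_neg, map_mul, hInorm, one_mul], ?_⟩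
    rw [neg_mul, mul_assoc, self_mul_star, mul_coe_eq_smul]
    simp [hIre]
  · rintro ⟨hnorm, hre⟩
    rcases eq_or_ne b 0 with rfl | hb
    · obtain ⟨I, hI⟩ := exists_sq_eq_neg_one (R := R)
      exact ⟨I, hI, by simpa using hnorm⟩
    · refine ⟨-(a * b⁻¹), sq_eq_neg_one_iff.2 ⟨?_, ?_⟩, by simp [hb]⟩
      · rw [re_neg, inv_def, mul_smul_comm, re_smul, hre, smul_zero, neg_zero]
      · rw [normSq_neg, map_mul, normSq_inv, hnorm, mul_inv_cancel₀ (normSq_ne_zero.2 hb)]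

end Quaternion

open Quaternion

theorem zero_set_of_normal_function_general (D : Set ℂ)
    (F₁ F₂ : ℂ → Quaternion ℝ)
    (f n : Quaternion ℝ → Quaternion ℝ)
    (hf : ∀ (I : Quaternion ℝ), I ^ 2 = -1 → ∀ α β : ℝ, (α : ℂ) + β * Complex.I ∈ D →
      f ((α : Quaternion ℝ) + β • I)
        = F₁ ((α : ℂ) + β * Complex.I) + I * F₂ ((α : ℂ) + β * Complex.I))
    (hn : ∀ (I : Quaternion ℝ), I ^ 2 = -1 → ∀ α β : ℝ, (α : ℂ) + β * Complex.I ∈ D →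
      n ((α : Quaternion ℝ) + β • I)
        = (F₁ ((α : ℂ) + β * Complex.I) * star (F₁ ((α : ℂ) + β * Complex.I))
            - F₂ ((α : ℂ) + β * Complex.I) * star (F₂ ((α : ℂ) + β * Complex.I)))
          + I * (F₁ ((α : ℂ) + β * Complex.I) * star (F₂ ((α : ℂ) + β * Complex.I))
            + F₂ ((α : ℂ) + β * Complex.I) * star (F₁ ((α : ℂ) + β * Complex.I)))) :
    ∀ (J : Quaternion ℝ), J ^ 2 = -1 → ∀ α β : ℝ, (α : ℂ) + β * Complex.I ∈ D →
      (n ((α : Quaternion ℝ) + β • J) = 0 ↔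
        ∃ I : Quaternion ℝ, I ^ 2 = -1 ∧ f ((α : Quaternion ℝ) + β • I) = 0) := by
  intro J hJ α β hz
  rw [hn J hJ α β hz, mul_star_sub_mul_star_add_mul_eq_zero_iff hJ, ← exists_sq_eq_neg_one_add_mul_eq_zero_iff]
  exact exists_congr fun I => and_congr_right fun hI => by rw [hf I hI α β hz]

/-- The zero set of the symmetrization `N(f) = I(FF^c)` is the circularization of the
zero set of `f`: on each sphere of `Ω_D`, `N(f)` vanishes iff `f` has a zero on that
sphere. -/
theorem zero_set_of_normal_function (D : Set ℂ) (hD : IsOpen D)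
    (hsym : ∀ z ∈ D, (starRingEnd ℂ) z ∈ D)
    (F₁ F₂ : ℂ → Quaternion ℝ)
    (hstem : ∀ z ∈ D, F₁ ((starRingEnd ℂ) z) = F₁ z ∧ F₂ ((starRingEnd ℂ) z) = -F₂ z)
    (f n : Quaternion ℝ → Quaternion ℝ)
    (hf : ∀ (I : Quaternion ℝ), I ^ 2 = -1 → ∀ α β : ℝ, (α : ℂ) + β * Complex.I ∈ D →
      f ((α : Quaternion ℝ) + β • I)
        = F₁ ((α : ℂ) + β * Complex.I) + I * F₂ ((α : ℂ) + β * Complex.I))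
    (hn : ∀ (I : Quaternion ℝ), I ^ 2 = -1 → ∀ α β : ℝ, (α : ℂ) + β * Complex.I ∈ D →
      n ((α : Quaternion ℝ) + β • I)
        = (F₁ ((α : ℂ) + β * Complex.I) * star (F₁ ((α : ℂ) + β * Complex.I))
            - F₂ ((α : ℂ) + β * Complex.I) * star (F₂ ((α : ℂ) + β * Complex.I)))
          + I * (F₁ ((α : ℂ) + β * Complex.I) * star (F₂ ((α : ℂ) + β * Complex.I))
            + F₂ ((α : ℂ) + β * Complex.I) * star (F₁ ((α : ℂ) + β * Complex.I)))) :
    ∀ (J : Quaternion ℝ), J ^ 2 = -1 → ∀ α β : ℝ, (α : ℂ) + β * Complex.I ∈ D →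
      (n ((α : Quaternion ℝ) + β • J) = 0 ↔
        ∃ I : Quaternion ℝ, I ^ 2 = -1 ∧ f ((α : Quaternion ℝ) + β • I) = 0) :=
  zero_set_of_normal_function_general D F₁ F₂ f n hf hn
end

section
/- Identity principle without real points: let Ω_D be a connected circular open set in ℍ and f = I(F) ∈ SR(Ω_D) a slice regular function. If there exist J ≠ K in S such that both V(f) ∩ D_J⁺ and V(f) ∩ D_K⁺ have an accumulation point (in D_J⁺ resp. D_K⁺), then f ≡ 0 on Ω_D. -/
/-!
The set `D⁺ = {z ∈ D | 0 ≤ Im z}` is the image of the connected set `Ω_D` under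
`x ↦ Re x + |Im x| i`, so it lies in a single connected component `C` of `D`.
For an imaginary unit `q`, the Cauchy–Riemann equations of the stem function say that the
differential of `F₁ + q F₂` turns multiplication by `i` into left multiplication by `q`.
Composing with `x ↦ c (q x) + i c x` for real functionals `c` therefore produces holomorphic
functions, and the classical identity principle shows that `F₁ + q F₂` vanishes on `C` once its
zeros accumulate there. Doing this for `q = J` and `q = K` with `J ≠ K` gives `F₁ = F₂ = 0`
on `D⁺`, and the stem symmetries extend this to all of `D`.
-/

open Filter

/-- The circular set `Ω_D ⊆ ℍ` associated with `D ⊆ ℂ`. -/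
def circularSet (D : Set ℂ) : Set (Quaternion ℝ) :=
  {x | ∃ α β : ℝ, ∃ I : Quaternion ℝ, I ^ 2 = -1 ∧ (α : ℂ) + β * Complex.I ∈ D ∧
    x = (α : Quaternion ℝ) + β • I}

/-- The half slice `D_J⁺ = Ω_D ∩ ℂ_J⁺`. -/
def halfSlice (D : Set ℂ) (J : Quaternion ℝ) : Set (Quaternion ℝ) :=
  {x | ∃ α β : ℝ, 0 ≤ β ∧ (α : ℂ) + β * Complex.I ∈ D ∧
    x = (α : Quaternion ℝ) + β • J}

open Topology Quaternion

section ComplexStructure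

variable {E : Type*} [NormedAddCommGroup E] [NormedSpace ℝ E]

/-- For a complex structure `T` (`T ∘ T = -1`), this map intertwines `T` with multiplication by
`i`, so it turns maps whose differential is `T`-linear into holomorphic ones. -/
noncomputable def dualToComplex (T : E →L[ℝ] E) (c : StrongDual ℝ E) : E →L[ℝ] ℂ :=
  Complex.ofRealCLM.comp (c.comp T) + Complex.I • Complex.ofRealCLM.comp c

variable {T : E →L[ℝ] E}

lemma dualToComplex_apply (c : StrongDual ℝ E) (x : E) :
    dualToComplex T c x = c (T x) + Complex.I * c x := by
  simp [dualToComplex]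

lemma im_dualToComplex (c : StrongDual ℝ E) (x : E) : (dualToComplex T c x).im = c x := by
  simp [dualToComplex_apply]

lemma dualToComplex_map (hT : ∀ x, T (T x) = -x) (c : StrongDual ℝ E) (x : E) :
    dualToComplex T c (T x) = Complex.I * dualToComplex T c x := by
  simp only [dualToComplex_apply, hT, map_neg, Complex.ofReal_neg]
  linear_combination -(c x : ℂ) * Complex.I_sq

lemma HasFDerivAt.differentiableAt_dualToComplex_comp (hT : ∀ x, T (T x) = -x)
    {G : ℂ → E} {L : ℂ →L[ℝ] E} {z : ℂ} (hG : HasFDerivAt G L z) (hL : L Complex.I = T (L 1))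
    (c : StrongDual ℝ E) : DifferentiableAt ℂ (dualToComplex T c ∘ G) z :=
  ((dualToComplex T c).hasFDerivAt.comp z hG).complexOfReal_hasFDerivAt
    (by simp [hL, dualToComplex_map hT]) |>.differentiableAt

theorem eqOn_zero_of_hasFDerivAt_of_frequently_eq_zero (hT : ∀ x, T (T x) = -x)
    {G : ℂ → E} {U : Set ℂ} (hU : IsOpen U) (hUc : IsPreconnected U)
    (hG : ∀ z ∈ U, ∃ L : ℂ →L[ℝ] E, HasFDerivAt G L z ∧ L Complex.I = T (L 1))
    {z₀ : ℂ} (hz₀ : z₀ ∈ U) (hfreq : ∃ᶠ z in 𝓝[≠] z₀, G z = 0) : Set.EqOn G 0 U := by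
  intro z hz
  refine SeparatingDual.eq_zero_of_forall_dual_eq_zero (R := ℝ) fun c => ?_
  have hol : DifferentiableOn ℂ (dualToComplex T c ∘ G) U := fun w hw => by
    obtain ⟨L, hL, hLI⟩ := hG w hw
    exact (hL.differentiableAt_dualToComplex_comp hT hLI c).differentiableWithinAt
  have hzero := (hol.analyticOnNhd hU).eqOn_zero_of_preconnected_of_frequently_eq_zero hUc hz₀
    (hfreq.mono fun w hw => by simp [hw])
  simpa [im_dualToComplex] using congrArg Complex.im (hzero hz)

end ComplexStructure

namespace Quaternion

variable {q : ℍ}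

lemma norm_eq_one_of_sq_eq_neg_one (hq : q ^ 2 = -1) : ‖q‖ = 1 := by
  have : ‖q‖ ^ 2 = 1 := by rw [← norm_pow, hq, norm_neg, norm_one]
  exact (pow_eq_one_iff_of_nonneg (norm_nonneg q) two_ne_zero).mp this

lemma re_eq_zero_of_sq_eq_neg_one (hq : q ^ 2 = -1) : q.re = 0 :=
  sq_eq_neg_normSq.mp <| by
    rw [hq, normSq_eq_norm_mul_self, norm_eq_one_of_sq_eq_neg_one hq, mul_one, coe_one]

lemma re_coe_add_smul (hq : q ^ 2 = -1) (α β : ℝ) : ((α : ℍ) + β • q).re = α := by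
  simp [re_eq_zero_of_sq_eq_neg_one hq]

lemma norm_im_coe_add_smul (hq : q ^ 2 = -1) (α β : ℝ) : ‖((α : ℍ) + β • q).im‖ = |β| := by
  have him : ((α : ℍ) + β • q).im = β • q := by
    ext <;> simp [re_eq_zero_of_sq_eq_neg_one hq]
  rw [him, norm_smul, norm_eq_one_of_sq_eq_neg_one hq, mul_one, Real.norm_eq_abs]

lemma coeComplex_I_sq : ((Complex.I : ℂ) : ℍ) ^ 2 = -1 := by
  rw [sq, ← coeComplex_mul, Complex.I_mul_I]
  ext <;> simp

end Quaternion

lemma Topology.IsEmbedding.accPt_of_accPt_image {X Y : Type*} [TopologicalSpace X]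
    [TopologicalSpace Y] {ψ : X → Y} (hψ : IsEmbedding ψ) {x : X} {s : Set X}
    (h : AccPt (ψ x) (𝓟 (ψ '' s))) : AccPt x (𝓟 s) := by
  rw [accPt_iff_frequently] at h ⊢
  rw [hψ.isInducing.nhds_eq_comap, Filter.frequently_comap]
  refine h.mono ?_
  rintro _ ⟨hne, y, hy, rfl⟩
  exact ⟨y, rfl, fun hyx => hne (congrArg ψ hyx), hy⟩

lemma Complex.isEmbedding_liftAux {A : Type*} [NormedRing A] [NormedAlgebra ℝ A] [Nontrivial A]
    (I' : A) (hI' : I' * I' = -1) : IsEmbedding (Complex.liftAux I' hI') :=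
  (LinearMap.isClosedEmbedding_of_injective (f := (Complex.liftAux I' hI').toLinearMap)
    (LinearMap.ker_eq_bot.mpr (Complex.liftAux I' hI').toRingHom.injective)).isEmbedding

lemma image_circularSet {D : Set ℂ} (hsym : ∀ z ∈ D, (starRingEnd ℂ) z ∈ D) :
    (fun x : ℍ => (x.re : ℂ) + ‖x.im‖ * Complex.I) '' circularSet D
      = {z | z ∈ D ∧ 0 ≤ z.im} := by
  apply Set.Subset.antisymm
  · rintro - ⟨-, ⟨α, β, I, hI, hz, rfl⟩, rfl⟩
    simp only [re_coe_add_smul hI, norm_im_coe_add_smul hI]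
    rcases le_or_gt 0 β with hβ | hβ
    · simpa [abs_of_nonneg hβ, hβ] using hz
    · simpa [abs_of_neg hβ, hβ.le, Complex.ext_iff] using hsym _ hz
  · rintro z ⟨hz, him⟩
    refine ⟨(z.re : ℍ) + z.im • ((Complex.I : ℂ) : ℍ),
      ⟨z.re, z.im, _, coeComplex_I_sq, by rwa [Complex.re_add_im], rfl⟩, ?_⟩
    simp only [re_coe_add_smul coeComplex_I_sq, norm_im_coe_add_smul coeComplex_I_sq,
      abs_of_nonneg him, Complex.re_add_im]

lemma isPreconnected_upper_of_isConnected_circularSet {D : Set ℂ}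
    (hsym : ∀ z ∈ D, (starRingEnd ℂ) z ∈ D) (hconn : IsConnected (circularSet D)) :
    IsPreconnected {z | z ∈ D ∧ 0 ≤ z.im} := by
  rw [← image_circularSet hsym]
  refine (hconn.image _ (Continuous.continuousOn ?_)).isPreconnected
  exact (Complex.continuous_ofReal.comp continuous_re).add
    ((Complex.continuous_ofReal.comp (continuous_im.norm)).mul continuous_const)

lemma eq_zero_of_add_mul_eq_zero_of_ne {R : Type*} [Ring R] [NoZeroDivisors R] {a b J K : R}
    (hJK : J ≠ K) (hJ : a + J * b = 0) (hK : a + K * b = 0) : a = 0 ∧ b = 0 := by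
  have hb : b = 0 := by
    have : (J - K) * b = 0 := by
      rw [sub_mul, sub_eq_zero]
      exact add_left_cancel (hJ.trans hK.symm)
    exact (mul_eq_zero.mp this).resolve_left (sub_ne_zero.mpr hJK)
  exact ⟨by simpa [hb] using hJ, hb⟩

section Stem

variable {D : Set ℂ} {F₁ F₂ : ℂ → ℍ}

lemma hasFDerivAt_add_mul_of_cauchyRiemann {z : ℂ} (hF₁ : DifferentiableAt ℝ F₁ z)
    (hF₂ : DifferentiableAt ℝ F₂ z) (hCR₁ : fderiv ℝ F₁ z 1 = fderiv ℝ F₂ z Complex.I)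
    (hCR₂ : fderiv ℝ F₁ z Complex.I = -(fderiv ℝ F₂ z 1)) {q : ℍ} (hq : q ^ 2 = -1) :
    ∃ L : ℂ →L[ℝ] ℍ, HasFDerivAt (fun w => F₁ w + q * F₂ w) L z ∧ L Complex.I = q * L 1 := by
  refine ⟨_, hF₁.hasFDerivAt.add (hF₂.hasFDerivAt.const_mul q), ?_⟩
  simp only [add_apply, smul_apply, smul_eq_mul, hCR₁, hCR₂, mul_add, ← mul_assoc, ← sq, hq]
  noncomm_ring

lemma eqOn_add_mul_zero_of_accPt
    (hreg : ∀ z ∈ D, DifferentiableAt ℝ F₁ z ∧ DifferentiableAt ℝ F₂ z ∧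
      fderiv ℝ F₁ z 1 = fderiv ℝ F₂ z Complex.I ∧
      fderiv ℝ F₁ z Complex.I = -(fderiv ℝ F₂ z 1))
    {q : ℍ} (hq : q ^ 2 = -1) {C : Set ℂ} (hC : IsOpen C) (hCc : IsPreconnected C) (hCD : C ⊆ D)
    {z₀ : ℂ} (hz₀ : z₀ ∈ C) (hacc : AccPt z₀ (𝓟 {z | z ∈ D ∧ F₁ z + q * F₂ z = 0})) :
    Set.EqOn (fun z => F₁ z + q * F₂ z) 0 C := by
  refine eqOn_zero_of_hasFDerivAt_of_frequently_eq_zero (T := ContinuousLinearMap.mul ℝ ℍ q)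
    (fun x => by simp [← mul_assoc, ← sq, hq]) hC hCc (fun z hz => ?_) hz₀ ?_
  · obtain ⟨h₁, h₂, hCR₁, hCR₂⟩ := hreg z (hCD hz)
    simpa using hasFDerivAt_add_mul_of_cauchyRiemann h₁ h₂ hCR₁ hCR₂ hq
  · exact (accPt_iff_frequently_nhdsNE.mp hacc).mono fun z hz => hz.2

lemma accPt_add_mul_zero_of_accPt_halfSlice {f : ℍ → ℍ} {q : ℍ} (hq : q ^ 2 = -1)
    (hf : ∀ α β : ℝ, (α : ℂ) + β * Complex.I ∈ D →
      f ((α : ℍ) + β • q) = F₁ ((α : ℂ) + β * Complex.I) + q * F₂ ((α : ℂ) + β * Complex.I))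
    {α β : ℝ} (hacc : AccPt ((α : ℍ) + β • q) (𝓟 ({x | f x = 0} ∩ halfSlice D q))) :
    AccPt ((α : ℂ) + β * Complex.I) (𝓟 {z | z ∈ D ∧ F₁ z + q * F₂ z = 0}) := by
  have hq' : q * q = -1 := sq q ▸ hq
  have hlift : ∀ a b : ℝ, Complex.liftAux q hq' ((a : ℂ) + b * Complex.I) = (a : ℍ) + b • q := by
    intro a b
    simp [Complex.liftAux_apply]
  apply (Complex.isEmbedding_liftAux q hq').accPt_of_accPt_image
  rw [hlift]
  refine hacc.mono (Filter.principal_mono.mpr ?_)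
  rintro _ ⟨hfx, a, b, -, hz, rfl⟩
  exact ⟨_, ⟨hz, hf a b hz ▸ hfx⟩, hlift a b⟩

lemma stem_eq_zero_of_eq_zero_of_im_nonneg (hsym : ∀ z ∈ D, (starRingEnd ℂ) z ∈ D)
    (hstem : ∀ z ∈ D, F₁ ((starRingEnd ℂ) z) = F₁ z ∧ F₂ ((starRingEnd ℂ) z) = -F₂ z)
    (h : ∀ z ∈ D, 0 ≤ z.im → F₁ z = 0 ∧ F₂ z = 0) : ∀ z ∈ D, F₁ z = 0 ∧ F₂ z = 0 := by
  intro z hz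
  rcases le_or_gt 0 z.im with him | him
  · exact h z hz him
  · obtain ⟨h₁, h₂⟩ := h _ (hsym z hz) (by simpa using him.le)
    rw [(hstem z hz).1] at h₁
    rw [(hstem z hz).2, neg_eq_zero] at h₂
    exact ⟨h₁, h₂⟩

end Stem

/-- Identity principle for slice regular functions on domains without real points:
if the zero set of `f` has an accumulation point in two distinct half slices
`D_J⁺`, `D_K⁺`, then `f ≡ 0` on `Ω_D`. -/
theorem identity_principle (D : Set ℂ) (hD : IsOpen D)
    (hsym : ∀ z ∈ D, (starRingEnd ℂ) z ∈ D)
    (F₁ F₂ : ℂ → Quaternion ℝ)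
    (hstem : ∀ z ∈ D, F₁ ((starRingEnd ℂ) z) = F₁ z ∧ F₂ ((starRingEnd ℂ) z) = -F₂ z)
    (hreg : ∀ z ∈ D, DifferentiableAt ℝ F₁ z ∧ DifferentiableAt ℝ F₂ z ∧
      fderiv ℝ F₁ z 1 = fderiv ℝ F₂ z Complex.I ∧
      fderiv ℝ F₁ z Complex.I = -(fderiv ℝ F₂ z 1))
    (hconn : IsConnected (circularSet D))
    (f : Quaternion ℝ → Quaternion ℝ)
    (hf : ∀ (I : Quaternion ℝ), I ^ 2 = -1 → ∀ α β : ℝ, (α : ℂ) + β * Complex.I ∈ D →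
      f ((α : Quaternion ℝ) + β • I)
        = F₁ ((α : ℂ) + β * Complex.I) + I * F₂ ((α : ℂ) + β * Complex.I))
    (J K : Quaternion ℝ) (hJ : J ^ 2 = -1) (hK : K ^ 2 = -1) (hJK : J ≠ K)
    (haccJ : ∃ p ∈ halfSlice D J,
      AccPt p (𝓟 ({x | f x = 0} ∩ halfSlice D J)))
    (haccK : ∃ p ∈ halfSlice D K,
      AccPt p (𝓟 ({x | f x = 0} ∩ halfSlice D K))) :
    ∀ x ∈ circularSet D, f x = 0 := by
  obtain ⟨_, ⟨αJ, βJ, hβJ, hzJ, rfl⟩, haccJ⟩ := haccJ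
  obtain ⟨_, ⟨αK, βK, hβK, hzK, rfl⟩, haccK⟩ := haccK
  set C := connectedComponentIn D ((αJ : ℂ) + βJ * Complex.I)
  have hUC : {z | z ∈ D ∧ 0 ≤ z.im} ⊆ C :=
    (isPreconnected_upper_of_isConnected_circularSet hsym hconn).subset_connectedComponentIn
      ⟨hzJ, by simpa using hβJ⟩ fun z hz => hz.1
  have vanish : ∀ q : ℍ, q ^ 2 = -1 → ∀ α β : ℝ, 0 ≤ β → (α : ℂ) + β * Complex.I ∈ D →
      AccPt ((α : ℍ) + β • q) (𝓟 ({x | f x = 0} ∩ halfSlice D q)) →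
      Set.EqOn (fun z => F₁ z + q * F₂ z) 0 C := fun q hq α β hβ hz hacc =>
    eqOn_add_mul_zero_of_accPt hreg hq hD.connectedComponentIn isPreconnected_connectedComponentIn
      (connectedComponentIn_subset _ _) (hUC ⟨hz, by simpa using hβ⟩)
      (accPt_add_mul_zero_of_accPt_halfSlice hq (hf q hq) hacc)
  have hzero : ∀ z ∈ D, F₁ z = 0 ∧ F₂ z = 0 :=
    stem_eq_zero_of_eq_zero_of_im_nonneg hsym hstem fun z hz him =>
      eq_zero_of_add_mul_eq_zero_of_ne hJK (vanish J hJ αJ βJ hβJ hzJ haccJ (hUC ⟨hz, him⟩))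
        (vanish K hK αK βK hβK hzK haccK (hUC ⟨hz, him⟩))
  rintro _ ⟨α, β, I, hI, hz, rfl⟩
  simp [hf I hI α β hz, hzero _ hz]
end

section
/- Mean value property on a slice: let f = I(F) be slice regular on Ω_D, I ∈ S, a = γ + δI ∈ D_I⁺ with δ > 0, and r > 0 with the closed disc of center a and radius r contained in D_I⁺. Then f(a) = (1/2π) ∫₀^{2π} f(a + r e^{Iθ}) dθ. -/
/-!
For every real functional `L` on `ℍ`, the Cauchy–Riemann equations for the stem function make
`L ∘ F₁ + i L ∘ F₂` holomorphic, so it has the classical mean value property; its real and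
imaginary parts give the mean value property for `L ∘ F₁` and `L ∘ F₂`, hence for `F₁` and `F₂`
because functionals separate points. On the slice `ℂ_I` the function `f` is `F₁ + I F₂`, and
circle averages commute with left multiplication by `I`.
-/

open Metric Real

section CauchyRiemann

open Complex

variable {V W : Type*} [NormedAddCommGroup V] [NormedSpace ℝ V]
  [NormedAddCommGroup W] [NormedSpace ℝ W]

def CauchyRiemannAt (F₁ F₂ : ℂ → V) (z : ℂ) : Prop :=
  DifferentiableAt ℝ F₁ z ∧ DifferentiableAt ℝ F₂ z ∧
    fderiv ℝ F₁ z 1 = fderiv ℝ F₂ z I ∧ fderiv ℝ F₁ z I = -(fderiv ℝ F₂ z 1)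

theorem CauchyRiemannAt.continuousLinearMap_comp {F₁ F₂ : ℂ → V} {z : ℂ}
    (h : CauchyRiemannAt F₁ F₂ z) (L : V →L[ℝ] W) : CauchyRiemannAt (L ∘ F₁) (L ∘ F₂) z := by
  obtain ⟨h₁, h₂, hcr₁, hcr₂⟩ := h
  refine ⟨L.differentiableAt.comp z h₁, L.differentiableAt.comp z h₂, ?_⟩
  rw [(L.hasFDerivAt.comp z h₁.hasFDerivAt).fderiv, (L.hasFDerivAt.comp z h₂.hasFDerivAt).fderiv]
  simp [hcr₁, hcr₂]

theorem CauchyRiemannAt.differentiableAt_complex {u v : ℂ → ℝ} {z : ℂ}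
    (h : CauchyRiemannAt u v z) : DifferentiableAt ℂ (fun w ↦ (u w : ℂ) + v w • I) z := by
  obtain ⟨hu, hv, hcr₁, hcr₂⟩ := h
  have hg : HasFDerivAt (fun w ↦ (u w : ℂ) + v w • I)
      (ofRealCLM.comp (fderiv ℝ u z) + (fderiv ℝ v z).smulRight I) z :=
    (ofRealCLM.hasFDerivAt.comp z hu.hasFDerivAt).add (hv.hasFDerivAt.smul_const I)
  rw [differentiableAt_complex_iff_differentiableAt_real, hg.fderiv]
  refine ⟨hg.differentiableAt, ?_⟩
  apply Complex.ext <;> simp [hcr₁, hcr₂]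

end CauchyRiemann

section MeanValue

open Complex

variable {V : Type*} [NormedAddCommGroup V] [NormedSpace ℝ V] {c : ℂ} {R : ℝ}

theorem circleIntegrable_of_cauchyRiemannAt {F₁ F₂ : ℂ → V}
    (h : ∀ z ∈ closedBall c |R|, CauchyRiemannAt F₁ F₂ z) :
    CircleIntegrable F₁ c R ∧ CircleIntegrable F₂ c R :=
  ⟨ContinuousOn.circleIntegrable' fun z hz ↦
      (h z (sphere_subset_closedBall hz)).1.continuousAt.continuousWithinAt,
    ContinuousOn.circleIntegrable' fun z hz ↦
      (h z (sphere_subset_closedBall hz)).2.1.continuousAt.continuousWithinAt⟩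

theorem circleAverage_eq_of_cauchyRiemannAt_real {u v : ℂ → ℝ}
    (h : ∀ z ∈ closedBall c |R|, CauchyRiemannAt u v z) :
    circleAverage u c R = u c ∧ circleAverage v c R = v c := by
  set g : ℂ → ℂ := fun w ↦ (u w : ℂ) + v w • I
  have hg : DiffContOnCl ℂ g (ball c |R|) :=
    DifferentiableOn.diffContOnCl fun z hz ↦
      (h z (closure_ball_subset_closedBall hz)).differentiableAt_complex.differentiableWithinAt
  have hgint : CircleIntegrable g c R :=
    (hg.continuousOn_ball.mono sphere_subset_closedBall).circleIntegrable'
  have hmean := hg.circleAverage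
  constructor
  · have := congrArg re hmean
    rw [← reCLM_apply, ← reCLM.circleAverage_comp_comm hgint] at this
    simpa [g, Function.comp_def] using this
  · have := congrArg im hmean
    rw [← imCLM_apply, ← imCLM.circleAverage_comp_comm hgint] at this
    simpa [g, Function.comp_def] using this

theorem circleAverage_eq_of_cauchyRiemannAt [CompleteSpace V] {F₁ F₂ : ℂ → V}
    (h : ∀ z ∈ closedBall c |R|, CauchyRiemannAt F₁ F₂ z) :
    circleAverage F₁ c R = F₁ c ∧ circleAverage F₂ c R = F₂ c := by
  obtain ⟨hint₁, hint₂⟩ := circleIntegrable_of_cauchyRiemannAt h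
  have hL (L : StrongDual ℝ V) := circleAverage_eq_of_cauchyRiemannAt_real fun z hz ↦
    (h z hz).continuousLinearMap_comp L
  rw [SeparatingDual.eq_iff_forall_dual_eq (R := ℝ), SeparatingDual.eq_iff_forall_dual_eq (R := ℝ)]
  exact ⟨fun L ↦ L.circleAverage_comp_comm hint₁ ▸ (hL L).1,
    fun L ↦ L.circleAverage_comp_comm hint₂ ▸ (hL L).2⟩

end MeanValue

theorem circleMap_add_mul_I (γ δ R θ : ℝ) :
    circleMap ((γ : ℂ) + δ * Complex.I) R θ
      = ((γ + R * cos θ : ℝ) : ℂ) + ((δ + R * sin θ : ℝ) : ℂ) * Complex.I := by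
  apply Complex.ext <;> simp [circleMap, Complex.exp_ofReal_mul_I_re, Complex.exp_ofReal_mul_I_im,
    Complex.cos_ofReal_re, Complex.sin_ofReal_re]

theorem mean_value_property_general (D : Set ℂ)
    (F₁ F₂ : ℂ → Quaternion ℝ)
    (hreg : ∀ z ∈ D, DifferentiableAt ℝ F₁ z ∧ DifferentiableAt ℝ F₂ z ∧
      fderiv ℝ F₁ z 1 = fderiv ℝ F₂ z Complex.I ∧
      fderiv ℝ F₁ z Complex.I = -(fderiv ℝ F₂ z 1))
    (f : Quaternion ℝ → Quaternion ℝ)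
    (hf : ∀ (I : Quaternion ℝ), I ^ 2 = -1 → ∀ α β : ℝ, (α : ℂ) + β * Complex.I ∈ D →
      f ((α : Quaternion ℝ) + β • I)
        = F₁ ((α : ℂ) + β * Complex.I) + I * F₂ ((α : ℂ) + β * Complex.I))
    (I : Quaternion ℝ) (hI : I ^ 2 = -1) (γ δ r : ℝ) (hr : 0 < r)
    (hball : Metric.closedBall ((γ : ℂ) + δ * Complex.I) r ⊆ {z ∈ D | 0 ≤ z.im}) :
    f ((γ : Quaternion ℝ) + δ • I)
      = (2 * Real.pi)⁻¹ • ∫ θ in (0 : ℝ)..(2 * Real.pi),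
          f (((γ + r * Real.cos θ : ℝ) : Quaternion ℝ) + (δ + r * Real.sin θ) • I) := by
  set c : ℂ := (γ : ℂ) + δ * Complex.I
  have hD : closedBall c r ⊆ D := fun z hz ↦ (hball hz).1
  have hCR : ∀ z ∈ closedBall c |r|, CauchyRiemannAt F₁ F₂ z := fun z hz ↦
    hreg z (hD (abs_of_pos hr ▸ hz))
  obtain ⟨hmean₁, hmean₂⟩ := circleAverage_eq_of_cauchyRiemannAt hCR
  obtain ⟨hint₁, hint₂⟩ := circleIntegrable_of_cauchyRiemannAt hCR
  have hslice (θ : ℝ) :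
      f (((γ + r * cos θ : ℝ) : Quaternion ℝ) + (δ + r * sin θ) • I)
        = F₁ (circleMap c r θ) + I * F₂ (circleMap c r θ) := by
    have h := hf I hI (γ + r * cos θ) (δ + r * sin θ)
    rw [← circleMap_add_mul_I] at h
    exact h (hD (circleMap_mem_closedBall c hr.le θ))
  calc f ((γ : Quaternion ℝ) + δ • I)
      = F₁ c + I * F₂ c := hf I hI γ δ (hD (mem_closedBall_self hr.le))
    _ = circleAverage (fun z ↦ F₁ z + I • F₂ z) c r := by
      rw [circleAverage_fun_add hint₁ hint₂.const_fun_smul, circleAverage_fun_smul, hmean₁,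
        hmean₂, smul_eq_mul]
    _ = _ := by simp only [circleAverage_def, hslice, smul_eq_mul]

/-- Mean value property on a half slice: for a slice regular function `f`, `I ∈ S`,
`a = γ + δI ∈ D_I⁺` and `r > 0` with the closed disc of center `a` and radius `r`
contained in `D_I⁺`, one has `f(a) = (1/2π) ∫₀^{2π} f(a + r e^{Iθ}) dθ`. -/
theorem mean_value_property (D : Set ℂ) (hD : IsOpen D)
    (hsym : ∀ z ∈ D, (starRingEnd ℂ) z ∈ D)
    (F₁ F₂ : ℂ → Quaternion ℝ)
    (hstem : ∀ z ∈ D, F₁ ((starRingEnd ℂ) z) = F₁ z ∧ F₂ ((starRingEnd ℂ) z) = -F₂ z)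
    (hreg : ∀ z ∈ D, DifferentiableAt ℝ F₁ z ∧ DifferentiableAt ℝ F₂ z ∧
      fderiv ℝ F₁ z 1 = fderiv ℝ F₂ z Complex.I ∧
      fderiv ℝ F₁ z Complex.I = -(fderiv ℝ F₂ z 1))
    (f : Quaternion ℝ → Quaternion ℝ)
    (hf : ∀ (I : Quaternion ℝ), I ^ 2 = -1 → ∀ α β : ℝ, (α : ℂ) + β * Complex.I ∈ D →
      f ((α : Quaternion ℝ) + β • I)
        = F₁ ((α : ℂ) + β * Complex.I) + I * F₂ ((α : ℂ) + β * Complex.I))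
    (I : Quaternion ℝ) (hI : I ^ 2 = -1) (γ δ r : ℝ) (hδ : 0 < δ) (hr : 0 < r)
    (hball : Metric.closedBall ((γ : ℂ) + δ * Complex.I) r ⊆ {z ∈ D | 0 ≤ z.im}) :
    f ((γ : Quaternion ℝ) + δ • I)
      = (2 * Real.pi)⁻¹ • ∫ θ in (0 : ℝ)..(2 * Real.pi),
          f (((γ + r * Real.cos θ : ℝ) : Quaternion ℝ) + (δ + r * Real.sin θ) • I) :=
  mean_value_property_general D F₁ F₂ hreg f hf I hI γ δ r hr hball
end
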